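/- (Sparse truncation.) Let d ≥ 1 and 1 ≤ k ≤ d, let x, y ∈ ℝ^d with y having at most k nonzero coordinates, and let t_k(x) denote any vector obtained from x by keeping k coordinates of largest absolute value (ties broken arbitrarily) and setting all other coordinates to zero. Then ‖t_k(x) − y‖₂ ≤ √6·‖x − y‖_{2,k}. -/
import Mathlib


open Real

noncomputable section

/-- A vector is `k`-sparse if it has at most `k` nonzero coordinates. -/
def IsSparse {d : ℕ} (k : ℕ) (v : Fin d → ℝ) : Prop := (Function.support v).ncard ≤ k

/-- Euclidean norm on `ℝ^d`. -/
def euclNorm {d : ℕ} (x : Fin d → ℝ) : ℝ := Real.sqrt (∑ i, (x i)^2)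

/-- Sparse Euclidean norm: `‖x‖_{2,k} = sup { vᵀx : ‖v‖₂ ≤ 1, v k-sparse }`. -/
def sparseNorm {d : ℕ} (k : ℕ) (x : Fin d → ℝ) : ℝ :=
  sSup { r : ℝ | ∃ v : Fin d → ℝ, euclNorm v ≤ 1 ∧ IsSparse k v ∧ r = ∑ i, v i * x i }

lemma zero_mem_sparseSet {d k : ℕ} (z : Fin d → ℝ) :
    (0:ℝ) ∈ { r : ℝ | ∃ v : Fin d → ℝ, euclNorm v ≤ 1 ∧ IsSparse k v ∧ r = ∑ i, v i * z i } := by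
  refine ⟨0, ?_, ?_, by simp⟩
  · simp [euclNorm]
  · simp [IsSparse, Function.support]

lemma bddAbove_sparseSet {d k : ℕ} (z : Fin d → ℝ) :
    BddAbove { r : ℝ | ∃ v : Fin d → ℝ, euclNorm v ≤ 1 ∧ IsSparse k v ∧ r = ∑ i, v i * z i } := by
  refine ⟨euclNorm z, ?_⟩
  rintro r ⟨v, hv, -, rfl⟩
  have h1 : ∑ i, v i * z i ≤ euclNorm v * euclNorm z := by
    have cs := Finset.sum_mul_sq_le_sq_mul_sq Finset.univ v z
    have h2 : ∑ i, v i * z i ≤ Real.sqrt ((∑ i, v i * z i)^2) := by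
      rw [Real.sqrt_sq_eq_abs]; exact le_abs_self _
    refine h2.trans ?_
    rw [euclNorm, euclNorm, ← Real.sqrt_mul (Finset.sum_nonneg fun i _ => sq_nonneg _)]
    exact Real.sqrt_le_sqrt cs
  refine h1.trans ?_
  calc euclNorm v * euclNorm z ≤ 1 * euclNorm z :=
        mul_le_mul_of_nonneg_right hv (Real.sqrt_nonneg _)
    _ = euclNorm z := one_mul _

lemma sparseNorm_nonneg {d k : ℕ} (z : Fin d → ℝ) : 0 ≤ sparseNorm k z :=
  le_csSup (bddAbove_sparseSet z) (zero_mem_sparseSet z)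

lemma sum_sq_le_sparseNorm_sq {d k : ℕ} (z : Fin d → ℝ) (A : Finset (Fin d))
    (hA : A.card ≤ k) : ∑ i ∈ A, (z i)^2 ≤ (sparseNorm k z)^2 := by
  set s := Real.sqrt (∑ i ∈ A, (z i)^2) with hs
  have hsum0 : (0:ℝ) ≤ ∑ i ∈ A, (z i)^2 := Finset.sum_nonneg fun i _ => sq_nonneg _
  have hs2 : s^2 = ∑ i ∈ A, (z i)^2 := Real.sq_sqrt hsum0
  have hsum : ∀ f : Fin d → ℝ, ∑ i : Fin d, (if i ∈ A then f i else 0) = ∑ i ∈ A, f i := by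
    intro f; rw [Finset.sum_ite_mem, Finset.univ_inter]
  have key : s ≤ sparseNorm k z := by
    rcases eq_or_lt_of_le (Real.sqrt_nonneg (∑ i ∈ A, (z i)^2)) with h0 | hpos
    · rw [hs, ← h0]; exact sparseNorm_nonneg z
    · have hsne : s ≠ 0 := by rw [hs]; exact ne_of_gt hpos
      apply le_csSup (bddAbove_sparseSet z)
      refine ⟨fun i => if i ∈ A then z i / s else 0, ?_, ?_, ?_⟩
      · have e1 : ∑ i : Fin d, (if i ∈ A then z i / s else 0)^2
            = (∑ i ∈ A, (z i)^2) / s^2 := by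
          rw [show (fun i => (if i ∈ A then z i / s else 0)^2)
              = fun i => (if i ∈ A then (z i)^2 / s^2 else 0) from
            funext fun i => by split <;> simp [div_pow]]
          rw [hsum, Finset.sum_div]
        rw [euclNorm, e1, ← hs2, div_self (pow_ne_zero 2 hsne)]
        simp
      · refine le_trans (le_trans (Set.ncard_le_ncard ?_ A.finite_toSet) (by simp)) hA
        intro i hi
        simp only [Function.mem_support] at hi
        simp only [Finset.mem_coe]
        by_contra hiA
        exact hi (if_neg hiA)
      · have e2 : ∑ i : Fin d, (if i ∈ A then z i / s else 0) * z i
            = (∑ i ∈ A, (z i)^2) / s := by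
          rw [show (fun i => (if i ∈ A then z i / s else 0) * z i)
              = fun i => (if i ∈ A then (z i)^2 / s else 0) from
            funext fun i => by split <;> ring_nf]
          rw [hsum, Finset.sum_div]
        rw [e2, ← hs2, sq, mul_div_assoc, div_self hsne, mul_one]
  calc ∑ i ∈ A, (z i)^2 = s^2 := hs2.symm
    _ ≤ (sparseNorm k z)^2 := pow_le_pow_left₀ (Real.sqrt_nonneg _) key 2


/-- Fact A.3 (sparse truncation): if `y` is `k`-sparse and `t_k(x)` keeps any `k`
coordinates of `x` of largest absolute value (zeroing the rest), then
`‖t_k(x) - y‖₂ ≤ √6 ‖x - y‖_{2,k}`.  Here `t_k(x)` is encoded by a set `S` of `k`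
coordinates on which `|x|` is maximal. -/
theorem sparse_truncation {d k : ℕ} (hd : 1 ≤ d) (hk1 : 1 ≤ k) (hk : k ≤ d)
    (x y : Fin d → ℝ) (hy : IsSparse k y)
    (S : Finset (Fin d)) (hS : S.card = k)
    (hmax : ∀ i ∈ S, ∀ j ∉ S, |x j| ≤ |x i|) :
    euclNorm ((fun i => if i ∈ S then x i else 0) - y) ≤
      Real.sqrt 6 * sparseNorm k (x - y) := by
  set z : Fin d → ℝ := x - y with hz
  set M : ℝ := sparseNorm k z with hM
  have hM0 : 0 ≤ M := sparseNorm_nonneg z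
  have hfin : (Function.support y).Finite := Set.toFinite _
  set T : Finset (Fin d) := hfin.toFinset with hT
  have hTcard : T.card ≤ k := by
    rw [hT, ← Set.ncard_eq_toFinset_card]; exact hy
  have hyT : ∀ i, i ∉ T → y i = 0 := by
    intro i hi
    by_contra h
    exact hi (by rw [hT, Set.Finite.mem_toFinset]; exact h)
  have hzi : ∀ i, z i = x i - y i := fun i => rfl
  -- the truncated difference
  set f : Fin d → ℝ := (fun i => if i ∈ S then x i else 0) - y with hf
  have hfi : ∀ i, f i = (if i ∈ S then x i else 0) - y i := fun i => rfl
  -- total sum over S ∪ T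
  have hsplit : ∑ i, (f i)^2 = ∑ i ∈ S, (z i)^2 + ∑ i ∈ T \ S, (y i)^2 := by
    have h1 : ∑ i, (f i)^2 = ∑ i ∈ S ∪ T, (f i)^2 := by
      refine (Finset.sum_subset (Finset.subset_univ _) ?_).symm
      intro i _ hi
      rw [Finset.mem_union, not_or] at hi
      rw [hfi, if_neg hi.1, hyT i hi.2]; ring
    have h2 : S ∪ T = S ∪ (T \ S) := by rw [Finset.union_sdiff_self_eq_union]
    rw [h1, h2, Finset.sum_union Finset.disjoint_sdiff]
    congr 1
    · exact Finset.sum_congr rfl fun i hi => by rw [hfi, if_pos hi, hzi]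
    · refine Finset.sum_congr rfl fun i hi => ?_
      rw [Finset.mem_sdiff] at hi
      rw [hfi, if_neg hi.2]; ring
  -- bounds
  have bS : ∑ i ∈ S, (z i)^2 ≤ M^2 := sum_sq_le_sparseNorm_sq z S (le_of_eq hS)
  have bTS : ∑ i ∈ T \ S, (z i)^2 ≤ M^2 :=
    sum_sq_le_sparseNorm_sq z _ (le_trans (Finset.card_le_card (Finset.sdiff_subset)) hTcard)
  -- ∑_{T\S} x² ≤ ∑_S z²
  have hSne : S.Nonempty := Finset.card_pos.mp (by omega)
  obtain ⟨i₀, hi₀S, hmin⟩ := Finset.exists_min_image S (fun i => (x i)^2) hSne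
  have bX : ∑ i ∈ T \ S, (x i)^2 ≤ ∑ i ∈ S, (z i)^2 := by
    have c1 : ∑ i ∈ T \ S, (x i)^2 ≤ (T \ S).card * (x i₀)^2 := by
      have := Finset.sum_le_card_nsmul (T \ S) (fun i => (x i)^2) ((x i₀)^2) ?_
      · simpa [nsmul_eq_mul] using this
      · intro j hj
        rw [Finset.mem_sdiff] at hj
        have h := hmax i₀ hi₀S j hj.2
        calc (x j)^2 = |x j|^2 := (sq_abs _).symm
          _ ≤ |x i₀|^2 := pow_le_pow_left₀ (abs_nonneg _) h 2
          _ = (x i₀)^2 := sq_abs _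
    have ccard : (T \ S).card ≤ (S \ T).card := by
      have e1 := Finset.card_sdiff_add_card_inter T S
      have e2 := Finset.card_sdiff_add_card_inter S T
      have e3 : (T ∩ S).card = (S ∩ T).card := by rw [Finset.inter_comm]
      omega
    have c2 : ((T \ S).card : ℝ) * (x i₀)^2 ≤ ((S \ T).card : ℝ) * (x i₀)^2 := by
      apply mul_le_mul_of_nonneg_right _ (sq_nonneg _)
      exact_mod_cast ccard
    have c3 : ((S \ T).card : ℝ) * (x i₀)^2 ≤ ∑ i ∈ S \ T, (x i)^2 := by
      have := Finset.card_nsmul_le_sum (S \ T) (fun i => (x i)^2) ((x i₀)^2) ?_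
      · simpa [nsmul_eq_mul] using this
      · intro j hj
        exact hmin j (Finset.mem_sdiff.mp hj).1
    have c4 : ∑ i ∈ S \ T, (x i)^2 = ∑ i ∈ S \ T, (z i)^2 := by
      refine Finset.sum_congr rfl fun i hi => ?_
      rw [hzi, hyT i (Finset.mem_sdiff.mp hi).2, sub_zero]
    have c5 : ∑ i ∈ S \ T, (z i)^2 ≤ ∑ i ∈ S, (z i)^2 :=
      Finset.sum_le_sum_of_subset_of_nonneg Finset.sdiff_subset
        (fun i _ _ => sq_nonneg _)
    linarith
  -- pointwise (y i)² ≤ 2 z² + 2 x²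
  have bY : ∑ i ∈ T \ S, (y i)^2 ≤ 2 * ∑ i ∈ T \ S, (z i)^2 + 2 * ∑ i ∈ T \ S, (x i)^2 := by
    rw [Finset.mul_sum, Finset.mul_sum, ← Finset.sum_add_distrib]
    refine Finset.sum_le_sum fun i _ => ?_
    have : y i = x i - z i := by rw [hzi]; ring
    rw [this]; nlinarith [sq_nonneg (x i + z i)]
  have total : ∑ i, (f i)^2 ≤ 6 * M^2 := by
    rw [hsplit]; nlinarith
  -- conclude
  rw [show euclNorm f = Real.sqrt (∑ i, (f i)^2) from rfl]
  calc Real.sqrt (∑ i, (f i)^2) ≤ Real.sqrt (6 * M^2) := Real.sqrt_le_sqrt total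
    _ = Real.sqrt 6 * M := by
        rw [Real.sqrt_mul (by norm_num), Real.sqrt_sq hM0]
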